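/- In the setting of the initial piece of the Lasso homotopy (β̂ minimizes F with support J₀, max_{j∉J₀}|v_j| < λ, Σ̂_{J₀} invertible, and β(t)_{J₀} = β̂_{J₀} + t·η(0), β(t)_{J₀^c} = 0 solving the augmented problem for t ∈ [0, t₁]), the dual variables off the active set evolve linearly: for every j ∉ J₀ and every t ∈ [0, t₁], the quantity v_j(t) := Σ_{i=1}^n (y_i − x_i'β(t))x_{i,j} + (x_{n+1}'β̂ + t − x_{n+1}'β(t))x_{n+1,j} satisfies v_j(t) = v_j + γ_j(0)·t, where γ(0) = (x_{n+1,J₀^c} − Σ̂_{J₀^c,J₀}Σ̂_{J₀}^{-1}x_{n+1,J₀}) / (1 + n^{-1}x_{n+1,J₀}'Σ̂_{J₀}^{-1}x_{n+1,J₀}). -/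
import Mathlib


open scoped BigOperators Matrix

noncomputable section

/-- Euclidean inner product on `Fin p → ℝ`. -/
def dotp {p : ℕ} (a b : Fin p → ℝ) : ℝ := ∑ j, a j * b j

/-- The Lasso objective `F(β) = (1/2)∑ᵢ (yᵢ − xᵢ'β)² + λ‖β‖₁`. -/
def lassoObj {n p : ℕ} (x : Fin n → Fin p → ℝ) (y : Fin n → ℝ) (lam : ℝ)
    (β : Fin p → ℝ) : ℝ :=
  (1 / 2) * ∑ i, (y i - dotp (x i) β) ^ 2 + lam * ∑ j, |β j|

/-- The augmented Lasso objective with `(x_{n+1}, ynew)` added as the `(n+1)`-th sample. -/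
def augObj {n p : ℕ} (x : Fin n → Fin p → ℝ) (y : Fin n → ℝ) (xnew : Fin p → ℝ)
    (lam : ℝ) (ynew : ℝ) (β : Fin p → ℝ) : ℝ :=
  lassoObj x y lam β + (1 / 2) * (ynew - dotp xnew β) ^ 2

/-- The submatrix `Σ̂_J` of the sample covariance matrix `Σ̂ = n⁻¹∑ᵢ xᵢxᵢ'`. -/
def gramJ {n p : ℕ} (x : Fin n → Fin p → ℝ) (J : Finset (Fin p)) : Matrix ↥J ↥J ℝ :=
  Matrix.of fun a b => (1 / (n : ℝ)) * ∑ i, x i a.1 * x i b.1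

/-- The subvector `u_J` of `u` with coordinates in `J`. -/
def subv {p : ℕ} (u : Fin p → ℝ) (J : Finset (Fin p)) : ↥J → ℝ := fun a => u a.1

/-- `Σ̂_J⁻¹ x_{n+1,J}`. -/
def invPart {n p : ℕ} (x : Fin n → Fin p → ℝ) (J : Finset (Fin p)) (xnew : Fin p → ℝ) :
    ↥J → ℝ :=
  (gramJ x J)⁻¹ *ᵥ subv xnew J

/-- The denominator `1 + n⁻¹ x_{n+1,J}'Σ̂_J⁻¹x_{n+1,J}`. -/
def denomC {n p : ℕ} (x : Fin n → Fin p → ℝ) (J : Finset (Fin p)) (xnew : Fin p → ℝ) : ℝ :=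
  1 + (1 / (n : ℝ)) * (subv xnew J ⬝ᵥ invPart x J xnew)

/-- The slope vector `η = n⁻¹Σ̂_J⁻¹x_{n+1,J} / (1 + n⁻¹x_{n+1,J}'Σ̂_J⁻¹x_{n+1,J})`,
extended by `0` off `J`. -/
def etaV {n p : ℕ} (x : Fin n → Fin p → ℝ) (J : Finset (Fin p)) (xnew : Fin p → ℝ) :
    Fin p → ℝ := fun j =>
  if h : j ∈ J then (1 / (n : ℝ)) * invPart x J xnew ⟨j, h⟩ / denomC x J xnew else 0

/-- The dual slope vector
`γ = (x_{n+1,J^c} − Σ̂_{J^c,J}Σ̂_J⁻¹x_{n+1,J}) / (1 + n⁻¹x_{n+1,J}'Σ̂_J⁻¹x_{n+1,J})`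
(only its coordinates off `J` are used). -/
def gammaV {n p : ℕ} (x : Fin n → Fin p → ℝ) (J : Finset (Fin p)) (xnew : Fin p → ℝ) :
    Fin p → ℝ := fun j =>
  (xnew j - ∑ a : ↥J, ((1 / (n : ℝ)) * ∑ i, x i j * x i a.1) * invPart x J xnew a) /
    denomC x J xnew

/-- `rpp a b` is `(a/b)₊₊ ∈ EReal`, the ratio `a/b` computed with the conventions
`0/0 = 0`, `z/0 = sign(z)·∞`, and then `(z)₊₊ = z` if `z > 0`, `(z)₊₊ = +∞` if `z ≤ 0`.
(When `b = 0` the result is always `+∞`, matching the conventions.) -/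
def rpp (a b : ℝ) : EReal := if b ≠ 0 ∧ 0 < a / b then ((a / b : ℝ) : EReal) else ⊤

/-- The first point of change
`t₁ = min_{j∈J}(−β̂_j/η_j)₊₊ ∧ min_{j∈J^c}((sign(γ_j)λ − v_j)/γ_j)₊₊`. -/
def tOne {n p : ℕ} (x : Fin n → Fin p → ℝ) (J : Finset (Fin p)) (xnew : Fin p → ℝ)
    (βhat v : Fin p → ℝ) (lam : ℝ) : EReal :=
  (J.inf fun j => rpp (-(βhat j)) (etaV x J xnew j)) ⊓
    (Jᶜ.inf fun j => rpp (Real.sign (gammaV x J xnew j) * lam - v j) (gammaV x J xnew j))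

/-- The homotopy solution `β(t)`: `β(t)_J = β̂_J + t·η`, `β(t)_{J^c} = 0`. -/
def betaT {n p : ℕ} (x : Fin n → Fin p → ℝ) (J : Finset (Fin p)) (xnew : Fin p → ℝ)
    (βhat : Fin p → ℝ) (t : ℝ) : Fin p → ℝ := fun j =>
  if j ∈ J then βhat j + t * etaV x J xnew j else 0


/-- `dotp` with the eta vector, as a scalar formula. -/
lemma dotp_etaV {n p : ℕ} (x : Fin n → Fin p → ℝ) (J : Finset (Fin p)) (xnew : Fin p → ℝ)
    (a : Fin p → ℝ) :
    dotp a (etaV x J xnew) =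
      (1 / (n : ℝ)) * (subv a J ⬝ᵥ invPart x J xnew) / denomC x J xnew := by
  unfold dotp
  rw [← Finset.sum_subset (Finset.subset_univ J)
      (fun k _ hk => by simp [etaV, hk])]
  rw [← Finset.sum_attach J (fun k => a k * etaV x J xnew k)]
  unfold dotProduct subv etaV
  rw [Finset.mul_sum, Finset.sum_div]
  refine Finset.sum_congr rfl fun k _ => ?_
  rw [dif_pos k.2]
  ring

lemma denomC_pos {n p : ℕ} (x : Fin n → Fin p → ℝ) (J : Finset (Fin p)) (xnew : Fin p → ℝ)
    (hinv : IsUnit (gramJ x J)) : 0 < denomC x J xnew := by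
  classical
  set w := invPart x J xnew with hw
  have hgu : gramJ x J *ᵥ w = subv xnew J := by
    rw [hw, invPart, Matrix.mulVec_mulVec,
      Matrix.mul_nonsing_inv _ ((Matrix.isUnit_iff_isUnit_det _).mp hinv), Matrix.one_mulVec]
  have hqf : subv xnew J ⬝ᵥ w = (1 / (n : ℝ)) * ∑ i, (∑ a : ↥J, x i a.1 * w a) ^ 2 := by
    rw [← hgu]
    simp only [dotProduct, Matrix.mulVec, gramJ, Matrix.of_apply, sq,
      Finset.sum_mul, Finset.mul_sum]
    rw [Finset.sum_comm (γ := Fin n)]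
    refine Finset.sum_congr rfl fun i _ => ?_
    rw [Finset.sum_comm (γ := ↥J)]
    refine Finset.sum_congr rfl fun a _ => ?_
    refine Finset.sum_congr rfl fun b _ => ?_
    ring
  have h1 : (0 : ℝ) ≤ (1 / (n : ℝ)) * (subv xnew J ⬝ᵥ w) := by
    rw [hqf]; positivity
  unfold denomC
  rw [← hw]; linarith

/-- on the initial piece of the perturb-one Lasso homotopy, the dual variables off
the active set evolve linearly: for `j ∉ J₀` and `t ∈ [0, t₁]`,
`v_j(t) = ∑ᵢ (yᵢ − xᵢ'β(t))x_{i,j} + (x_{n+1}'β̂ + t − x_{n+1}'β(t))x_{n+1,j} = v_j + γ_j(0)·t`. -/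
theorem lasso_homotopy_dual_linear {n p : ℕ} (x : Fin n → Fin p → ℝ) (y : Fin n → ℝ)
    (xnew : Fin p → ℝ) (lam : ℝ) (hlam : 0 < lam) (βhat : Fin p → ℝ)
    (hmin : ∀ β, lassoObj x y lam βhat ≤ lassoObj x y lam β)
    (J₀ : Finset (Fin p)) (hJ₀ : ∀ j, j ∈ J₀ ↔ βhat j ≠ 0)
    (v : Fin p → ℝ) (hv : ∀ j, ∑ i, (y i - dotp (x i) βhat) * x i j = v j)
    (hstrict : ∀ j ∉ J₀, |v j| < lam)
    (hinv : IsUnit (gramJ x J₀))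
    (hsolves : ∀ t : ℝ, 0 ≤ t → (t : EReal) ≤ tOne x J₀ xnew βhat v lam →
      ∀ β, augObj x y xnew lam (dotp xnew βhat + t) (betaT x J₀ xnew βhat t) ≤
        augObj x y xnew lam (dotp xnew βhat + t) β) :
    ∀ j ∉ J₀, ∀ t : ℝ, 0 ≤ t → (t : EReal) ≤ tOne x J₀ xnew βhat v lam →
      (∑ i, (y i - dotp (x i) (betaT x J₀ xnew βhat t)) * x i j) +
        (dotp xnew βhat + t - dotp xnew (betaT x J₀ xnew βhat t)) * xnew j =
      v j + gammaV x J₀ xnew j * t := by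
  classical
  intro j hj t ht htle
  set w := invPart x J₀ xnew with hw
  set c := denomC x J₀ xnew with hcdef
  have hc0 : 0 < c := denomC_pos x J₀ xnew hinv
  have hc : c ≠ 0 := ne_of_gt hc0
  -- β(t) = β̂ + t·η pointwise
  have hbeta : betaT x J₀ xnew βhat t = fun k => βhat k + t * etaV x J₀ xnew k := by
    funext k
    by_cases hk : k ∈ J₀
    · simp [betaT, hk]
    · have hb0 : βhat k = 0 := by
        by_contra h; exact hk ((hJ₀ k).mpr h)
      simp [betaT, hk, etaV, hb0]
  have hlin : ∀ a : Fin p → ℝ,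
      dotp a (fun k => βhat k + t * etaV x J₀ xnew k)
        = dotp a βhat + t * dotp a (etaV x J₀ xnew) := by
    intro a
    simp [dotp, mul_add, Finset.sum_add_distrib, Finset.mul_sum, mul_left_comm]
  rw [hbeta]
  simp only [hlin]
  have hde : ∀ a : Fin p → ℝ, dotp a (etaV x J₀ xnew)
      = (1 / (n : ℝ)) * (subv a J₀ ⬝ᵥ w) / c := fun a => dotp_etaV x J₀ xnew a
  simp only [hde]
  -- split the big sum
  have hsplit : ∀ i : Fin n,
      (y i - (dotp (x i) βhat + t * ((1 / (n : ℝ)) * (subv (x i) J₀ ⬝ᵥ w) / c))) * x i j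
        = (y i - dotp (x i) βhat) * x i j
          - t * (((1 / (n : ℝ)) * (subv (x i) J₀ ⬝ᵥ w) / c) * x i j) := fun i => by ring
  rw [Finset.sum_congr rfl fun i _ => hsplit i, Finset.sum_sub_distrib, ← Finset.mul_sum, hv j]
  -- swap sums for the A term
  have hA : ∑ i, ((1 / (n : ℝ)) * (subv (x i) J₀ ⬝ᵥ w) / c) * x i j
      = (∑ a : ↥J₀, ((1 / (n : ℝ)) * ∑ i, x i j * x i a.1) * w a) / c := by
    unfold dotProduct subv
    rw [Finset.sum_div]
    simp only [Finset.mul_sum, Finset.sum_div, Finset.sum_mul]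
    rw [Finset.sum_comm]
    refine Finset.sum_congr rfl fun a _ => Finset.sum_congr rfl fun i _ => by ring
  rw [hA]
  -- now everything is scalar algebra
  have hgam : gammaV x J₀ xnew j
      = (xnew j - ∑ a : ↥J₀, ((1 / (n : ℝ)) * ∑ i, x i j * x i a.1) * w a) / c := rfl
  have hcval : c = 1 + (1 / (n : ℝ)) * (subv xnew J₀ ⬝ᵥ w) := rfl
  rw [hgam]
  have hB : (1 / (n : ℝ)) * (subv xnew J₀ ⬝ᵥ w) = c - 1 := by rw [hcval]; ring
  rw [hB]
  field_simp
  ring
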